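/- Let G be a Frobenius group with abelian Frobenius kernel K and let χ be a nonprincipal irreducible character of K. Then the induced character χ^G is irreducible of degree [G : K]. -/

import Mathlib

open CategoryTheory

/-- `G` is a Frobenius group with kernel `K` and complement `H`: `K` is a nontrivial
normal subgroup, `H` a nontrivial complement, and every nontrivial element of `H` fixes
only the identity of `K` under conjugation. -/
def IsFrobeniusWith (G : Type) [Group G] (K H : Subgroup G) : Prop :=
  K.Normal ∧ Subgroup.IsComplement' K H ∧ K ≠ ⊥ ∧ H ≠ ⊥ ∧
    ∀ h ∈ H, h ≠ 1 → ∀ k ∈ K, h * k * h⁻¹ = k → k = 1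

open scoped Classical in
/-- The character of `G` induced from the class function `f` on the subgroup `K`. -/
noncomputable def indChar {G : Type} [Group G] [Fintype G] (K : Subgroup G)
    (f : K → ℂ) (g : G) : ℂ :=
  (Nat.card K : ℂ)⁻¹ * ∑ x : G, if h : x⁻¹ * g * x ∈ K then f ⟨x⁻¹ * g * x, h⟩ else 0

/-! The induced representation is realised on `G ⧸ K → ℂ`, with `g` acting through the cocycle
`c.out * g / (c * g).out ∈ K`. Its trace vanishes off `K`, and at `k ∈ K` it is
`∑ c, χ (c.out * k * c.out⁻¹)`, which is the induced character. A fixed-point-free automorphism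
`φ` of a finite group makes `k ↦ k / φ k` surjective, so no nontrivial linear character is
`φ`-invariant; hence in a Frobenius group the conjugates of `χ ≠ 1` by distinct cosets are
distinct. Orthogonality of linear characters of `K` then gives
`∑ g, χ^G g * χ^G g⁻¹ = |K| * [G : K] = |G|`, the norm criterion for irreducibility. -/

theorem MonoidHom.FixedPointFree.eq_one_of_map_eq {F G A : Type*} [Group G] [Finite G]
    [CommGroup A] [FunLike F G G] [MonoidHomClass F G G] {φ : F} (hφ : FixedPointFree φ)
    {χ : G →* A} (hχ : ∀ g, χ (φ g) = χ g) : χ = 1 := by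
  ext g
  obtain ⟨x, rfl⟩ := hφ.commutatorMap_surjective g
  simp [hχ]

theorem LinearMap.trace_eq_sum_filter_of_apply_eq {ι R : Type*} [CommRing R] [Fintype ι]
    [DecidableEq ι] (T : (ι → R) →ₗ[R] ι → R) (a : ι → R) (σ : ι → ι)
    (hT : ∀ f i, T f i = a i * f (σ i)) :
    LinearMap.trace R _ T = ∑ i with σ i = i, a i := by
  rw [LinearMap.trace_eq_matrix_trace R (Pi.basisFun R ι), Matrix.trace, Finset.sum_filter]
  refine Finset.sum_congr rfl fun i _ => ?_
  simp [hT, Pi.single_apply]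

namespace Subgroup

variable {G : Type*} [Group G]

theorem sum_comp_mk [Fintype G] {K : Subgroup G} [Fintype (G ⧸ K)] {M : Type*}
    [AddCommMonoid M] (F : G ⧸ K → M) : ∑ x : G, F x = Nat.card K • ∑ c, F c := by
  classical
  rw [← Fintype.sum_fiberwise' (QuotientGroup.mk : G → G ⧸ K) F, Finset.smul_sum]
  refine Finset.sum_congr rfl fun c _ => ?_
  rw [Finset.sum_const, Finset.card_univ, ← Nat.card_eq_fintype_card]
  congr 1
  have := QuotientGroup.card_preimage_mk K {c}
  rwa [Nat.card_unique (α := ({c} : Set (G ⧸ K))), mul_one] at this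

variable (K : Subgroup G) [K.Normal]

theorem out_mul_div_out_mul_mem (g : G) (c : G ⧸ K) : c.out * g / (c * g).out ∈ K :=
  QuotientGroup.eq_iff_div_mem.mp (by simp)

noncomputable def inducedCocycle (g : G) (c : G ⧸ K) : K :=
  ⟨c.out * g / (c * g).out, K.out_mul_div_out_mul_mem g c⟩

variable {K}

@[simp] theorem coe_inducedCocycle (g : G) (c : G ⧸ K) :
    (K.inducedCocycle g c : G) = c.out * g / (c * g).out := rfl

theorem inducedCocycle_one (c : G ⧸ K) : K.inducedCocycle 1 c = 1 := by
  ext; simp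

theorem inducedCocycle_mul (g₁ g₂ : G) (c : G ⧸ K) :
    K.inducedCocycle (g₁ * g₂) c = K.inducedCocycle g₁ c * K.inducedCocycle g₂ (c * g₁) := by
  ext; simp [div_eq_mul_inv, mul_assoc]

theorem inducedCocycle_of_mem {g : G} (hg : g ∈ K) (c : G ⧸ K) :
    K.inducedCocycle g c = MulAut.conjNormal c.out ⟨g, hg⟩ := by
  ext; simp [(QuotientGroup.eq_one_iff g).mpr hg, div_eq_mul_inv]

theorem map_conjNormal_of_mem {A : Type*} [CommGroup A] (θ : K →* A) {k : G} (hk : k ∈ K)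
    (m : K) : θ (MulAut.conjNormal k m) = θ m := by
  have : MulAut.conjNormal k m = ⟨k, hk⟩ * m * (⟨k, hk⟩ : K)⁻¹ :=
    Subtype.ext (MulAut.conjNormal_apply k m)
  rw [this, map_mul, map_mul, map_inv, mul_inv_cancel_comm]

theorem map_conjNormal_eq_of_mk_eq {A : Type*} [CommGroup A] (θ : K →* A) {a b : G}
    (hab : (a : G ⧸ K) = b) (m : K) :
    θ (MulAut.conjNormal a m) = θ (MulAut.conjNormal b m) := by
  have hk : a⁻¹ * b ∈ K := QuotientGroup.eq.mp hab
  rw [← mul_inv_cancel_left a b, map_mul, MulAut.mul_apply]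
  exact (map_conjNormal_of_mem (θ.comp (MulAut.conjNormal a).toMonoidHom) hk m).symm

variable (K) {k : Type*} [CommRing k]

noncomputable def inducedRep (χ : K →* kˣ) : Representation k G (G ⧸ K → k) where
  toFun g :=
    { toFun f c := χ (K.inducedCocycle g c) * f (c * g)
      map_add' f₁ f₂ := funext fun c => mul_add _ _ _
      map_smul' r f := funext fun c => mul_left_comm _ _ _ }
  map_one' := by ext; simp [inducedCocycle_one]
  map_mul' g₁ g₂ := by ext; simp [inducedCocycle_mul, mul_assoc]

variable {K}

open scoped Classical in
theorem trace_inducedRep [Fintype (G ⧸ K)] (χ : K →* kˣ) (g : G) :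
    LinearMap.trace k _ (K.inducedRep χ g) =
      if h : g ∈ K then ∑ c : G ⧸ K, (χ (MulAut.conjNormal c.out ⟨g, h⟩) : k) else 0 := by
  rw [LinearMap.trace_eq_sum_filter_of_apply_eq _ _ (fun c : G ⧸ K => c * g) fun f c => rfl]
  split_ifs with hg
  · have : (g : G ⧸ K) = 1 := (QuotientGroup.eq_one_iff g).mpr hg
    simp [this, inducedCocycle_of_mem hg]
  · have : ∀ c : G ⧸ K, c * g ≠ c := fun c h =>
      hg ((QuotientGroup.eq_one_iff g).mp (mul_eq_left.mp h))
    simp [this]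

end Subgroup

section indChar

variable {G : Type} [Group G] [Fintype G] {K : Subgroup G} [K.Normal] [Fintype (G ⧸ K)]

open scoped Classical in
theorem indChar_eq_dite (χ : K →* ℂˣ) (g : G) :
    indChar K (fun k => (χ k : ℂ)) g =
      if h : g ∈ K then ∑ c : G ⧸ K, (χ (MulAut.conjNormal c.out ⟨g, h⟩) : ℂ) else 0 := by
  unfold indChar
  split_ifs with hg
  · have hterm : ∀ x : G, (if h : x⁻¹ * g * x ∈ K then (χ ⟨x⁻¹ * g * x, h⟩ : ℂ) else 0) =
        χ (MulAut.conjNormal ((x⁻¹ : G) : G ⧸ K).out ⟨g, hg⟩) := fun x => by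
      rw [dif_pos (‹K.Normal›.conj_mem' g hg x),
        K.map_conjNormal_eq_of_mk_eq _ (QuotientGroup.out_eq' _)]
      congr 2
      ext
      simp
    rw [Fintype.sum_congr _ _ hterm,
      Fintype.sum_equiv (Equiv.inv G)
        (fun x => (χ (MulAut.conjNormal ((x⁻¹ : G) : G ⧸ K).out ⟨g, hg⟩) : ℂ))
        (fun x => (χ (MulAut.conjNormal (x : G ⧸ K).out ⟨g, hg⟩) : ℂ)) fun _ => rfl,
      K.sum_comp_mk (fun c : G ⧸ K => (χ (MulAut.conjNormal c.out ⟨g, hg⟩) : ℂ)), nsmul_eq_mul,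
      inv_mul_cancel_left₀ (by simp)]
  · refine mul_eq_zero_of_right _ (Finset.sum_eq_zero fun x _ => dif_neg fun h => hg ?_)
    rwa [‹K.Normal›.mem_comm_iff, mul_inv_cancel_left] at h

theorem indChar_coe (χ : K →* ℂˣ) (k : K) :
    indChar K (fun k => (χ k : ℂ)) k = ∑ c : G ⧸ K, (χ (MulAut.conjNormal c.out k) : ℂ) := by
  rw [indChar_eq_dite, dif_pos k.2]

end indChar

namespace IsFrobeniusWith

variable {G : Type} [Group G] {K H : Subgroup G} [K.Normal]

theorem fixedPointFree_conjNormal (hF : IsFrobeniusWith G K H) {h : G} (hh : h ∈ H)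
    (h1 : h ≠ 1) : MonoidHom.FixedPointFree (MulAut.conjNormal (H := K) h) := fun m hm =>
  Subtype.ext <| hF.2.2.2.2 h hh h1 m m.2 <| by
    rw [← MulAut.conjNormal_apply, hm]

theorem mem_of_map_conjNormal_eq [Finite G] {A : Type*} [CommGroup A]
    (hF : IsFrobeniusWith G K H) {χ : K →* A} (hχ : χ ≠ 1) {g : G}
    (hg : ∀ m, χ (MulAut.conjNormal g m) = χ m) : g ∈ K := by
  obtain ⟨⟨k, h⟩, rfl, -⟩ := hF.2.1.existsUnique g
  by_cases h1 : (h : G) = 1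
  · simp [h1]
  refine absurd ((hF.fixedPointFree_conjNormal h.2 h1).eq_one_of_map_eq fun m => ?_) hχ
  calc χ (MulAut.conjNormal (h : G) m)
      = χ (MulAut.conjNormal (k : G) (MulAut.conjNormal (h : G) m)) :=
        (Subgroup.map_conjNormal_of_mem χ k.2 _).symm
    _ = χ m := by rw [← MulAut.mul_apply, ← map_mul, hg]

theorem mk_eq_of_map_conjNormal_eq [Finite G] {A : Type*} [CommGroup A]
    (hF : IsFrobeniusWith G K H) {χ : K →* A} (hχ : χ ≠ 1) {a b : G}
    (hab : ∀ m, χ (MulAut.conjNormal a m) = χ (MulAut.conjNormal b m)) :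
    (a : G ⧸ K) = b := by
  refine QuotientGroup.eq_iff_div_mem.mpr (hF.mem_of_map_conjNormal_eq hχ fun m => ?_)
  rw [div_eq_mul_inv, map_mul, MulAut.mul_apply, hab, ← MulAut.mul_apply, ← map_mul,
    mul_inv_cancel, map_one, MulAut.one_apply]

variable [Fintype G]

theorem sum_map_conjNormal_mul_map_conjNormal_inv (hF : IsFrobeniusWith G K H) [Fintype K]
    [DecidableEq (G ⧸ K)] {χ : K →* ℂˣ} (hχ : χ ≠ 1) (c c' : G ⧸ K) :
    ∑ k : K, (χ (MulAut.conjNormal c.out k) : ℂ) * χ (MulAut.conjNormal c'.out k⁻¹) =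
      if c = c' then (Nat.card K : ℂ) else 0 := by
  split_ifs with hc
  · subst hc
    simp [Nat.card_eq_fintype_card]
  let θ : K →* ℂ := (Units.coeHom ℂ).comp
    (χ.comp (MulAut.conjNormal c.out).toMonoidHom / χ.comp (MulAut.conjNormal c'.out).toMonoidHom)
  have hθ : θ ≠ 1 := fun hθ => hc <| by
    rw [← QuotientGroup.out_eq' c, ← QuotientGroup.out_eq' c']
    refine hF.mk_eq_of_map_conjNormal_eq hχ fun m => Units.ext ?_
    exact (div_eq_one_iff_eq (Units.ne_zero _)).mp (by simpa [θ] using DFunLike.congr_fun hθ m)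
  convert sum_hom_units_eq_zero θ hθ using 2 with k
  simp [θ, div_eq_mul_inv]

theorem sum_indChar_mul_indChar_inv (hF : IsFrobeniusWith G K H) {χ : K →* ℂˣ} (hχ : χ ≠ 1) :
    ∑ g : G, indChar K (fun k => (χ k : ℂ)) g * indChar K (fun k => (χ k : ℂ)) g⁻¹ =
      Nat.card G := by
  classical
  have hvanish : ∀ g : {g // g ∉ K}, indChar K (fun k => (χ k : ℂ)) g = 0 := fun g => by
    rw [indChar_eq_dite, dif_neg g.2]
  rw [← Fintype.sum_subtype_add_sum_subtype (· ∈ K)]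
  simp only [hvanish, zero_mul, Finset.sum_const_zero, add_zero]
  calc ∑ k : K, indChar K (fun k => (χ k : ℂ)) k * indChar K (fun k => (χ k : ℂ)) (k : G)⁻¹
      = ∑ c : G ⧸ K, ∑ c' : G ⧸ K, ∑ k : K,
          (χ (MulAut.conjNormal c.out k) : ℂ) * χ (MulAut.conjNormal c'.out k⁻¹) := by
        simp only [← Subgroup.coe_inv, indChar_coe, Finset.sum_mul_sum]
        rw [Finset.sum_comm]
        exact Finset.sum_congr rfl fun _ _ => Finset.sum_comm
    _ = Nat.card (G ⧸ K) * Nat.card K := by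
        simp only [hF.sum_map_conjNormal_mul_map_conjNormal_inv hχ, Finset.sum_ite_eq,
          Finset.mem_univ, if_true, Finset.sum_const, Finset.card_univ, nsmul_eq_mul,
          Nat.card_eq_fintype_card]
    _ = Nat.card G := by rw [← Nat.cast_mul, ← K.card_eq_card_quotient_mul_card_subgroup]

end IsFrobeniusWith

theorem induced_char_irreducible_of_frobenius_general
    (G : Type) [Group G] [Fintype G] (K H : Subgroup G)
    (hFrob : IsFrobeniusWith G K H)
    (χ : K →* ℂˣ) (hχ : χ ≠ 1) :
    ∃ V : FDRep ℂ G, Simple V ∧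
      (∀ g : G, V.character g = indChar K (fun k => (χ k : ℂ)) g) ∧
      Module.finrank ℂ V = K.index := by
  classical
  have := hFrob.1
  let V := FDRep.of (K.inducedRep (k := ℂ) χ)
  have hchar : ∀ g, V.character g = indChar K (fun k => (χ k : ℂ)) g := fun g =>
    (K.trace_inducedRep χ g).trans (indChar_eq_dite χ g).symm
  refine ⟨V, ?_, hchar, ?_⟩
  · rw [FDRep.simple_iff_char_is_norm_one]
    simp only [hchar]
    exact hFrob.sum_indChar_mul_indChar_inv hχ
  · rw [Module.finrank_fintype_fun_eq_card, Subgroup.index, Nat.card_eq_fintype_card]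

/-- Let `G` be a Frobenius group with abelian kernel `K`, and let `χ` be a nonprincipal
irreducible (i.e. nontrivial linear) character of `K`. Then the induced character `χ^G`
is irreducible of degree `[G : K]`. -/
theorem induced_char_irreducible_of_frobenius
    (G : Type) [Group G] [Fintype G] (K H : Subgroup G)
    (hFrob : IsFrobeniusWith G K H) (hab : ∀ a b : K, a * b = b * a)
    (χ : K →* ℂˣ) (hχ : χ ≠ 1) :
    ∃ V : FDRep ℂ G, Simple V ∧
      (∀ g : G, V.character g = indChar K (fun k => (χ k : ℂ)) g) ∧
      Module.finrank ℂ V = K.index :=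
  induced_char_irreducible_of_frobenius_general G K H hFrob χ hχ
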